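/- arXiv:math/0506101 — 3 statements merged into one kernel-verified Lean document; each statement's English description precedes it below -/
import Mathlib

section
/- Let n = n₁ + n₂ with n₁, n₂ ≥ 1, let 𝔥 ⊆ so(n₁) be a Lie subalgebra with derived subalgebra 𝔥′ and center z(𝔥), and let ψ : 𝔥 → ℝ^{n₂} be a linear map with ψ|_{𝔥′} = 0. Then the set 𝔥ol^{4,𝔥,ψ} of (n+2)×(n+2) real matrices of block form [[0, X, ψ(B), 0],[0, A+B, 0, −Xᵗ],[0, 0, 0, −ψ(B)ᵗ],[0, 0, 0, 0]] (blocks of sizes 1, n₁, n₂, 1) with X a 1×n₁ row vector, A ∈ 𝔥′, B ∈ z(𝔥), is closed under the matrix commutator, i.e. it is a Lie subalgebra of the Lie algebra of (n+2)×(n+2) real matrices. -/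
attribute [local instance 100] LieRing.ofAssociativeRing

def idx1 (n₁ n₂ : ℕ) (i : Fin n₁) : Fin (n₁ + n₂ + 2) := ⟨(i : ℕ) + 1, by omega⟩

def idx2 (n₁ n₂ : ℕ) (k : Fin n₂) : Fin (n₁ + n₂ + 2) := ⟨n₁ + 1 + (k : ℕ), by omega⟩

def idxV (n₁ n₂ : ℕ) : Fin (n₁ + n₂ + 2) := ⟨n₁ + n₂ + 1, by omega⟩

/-- The set `𝔥ol^{4,𝔥,ψ}` of matrices of block form (blocks of sizes `1, n₁, n₂, 1`)
`[[0, X, ψ(B), 0], [0, A + B, 0, -Xᵗ], [0, 0, 0, -ψ(B)ᵗ], [0, 0, 0, 0]]`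
with `X` a row vector, `A ∈ 𝔥' = [𝔥,𝔥]` and `B ∈ z(𝔥)`. -/
def hol4 (n₁ n₂ : ℕ) (𝔥 : LieSubalgebra ℝ (Matrix (Fin n₁) (Fin n₁) ℝ))
    (ψ : 𝔥 →ₗ[ℝ] (Fin n₂ → ℝ)) :
    Set (Matrix (Fin (n₁ + n₂ + 2)) (Fin (n₁ + n₂ + 2)) ℝ) :=
  {M | ∃ (X : Fin n₁ → ℝ) (A B : 𝔥), A ∈ LieAlgebra.derivedSeries ℝ 𝔥 1 ∧
    B ∈ LieAlgebra.center ℝ 𝔥 ∧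
    M 0 0 = 0 ∧ (∀ j, M 0 (idx1 n₁ n₂ j) = X j) ∧
    (∀ k, M 0 (idx2 n₁ n₂ k) = ψ B k) ∧ M 0 (idxV n₁ n₂) = 0 ∧
    (∀ i, M (idx1 n₁ n₂ i) 0 = 0) ∧
    (∀ i j, M (idx1 n₁ n₂ i) (idx1 n₁ n₂ j) =
      (A : Matrix (Fin n₁) (Fin n₁) ℝ) i j + (B : Matrix (Fin n₁) (Fin n₁) ℝ) i j) ∧
    (∀ i k, M (idx1 n₁ n₂ i) (idx2 n₁ n₂ k) = 0) ∧
    (∀ i, M (idx1 n₁ n₂ i) (idxV n₁ n₂) = -X i) ∧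
    (∀ k, M (idx2 n₁ n₂ k) 0 = 0) ∧
    (∀ k j, M (idx2 n₁ n₂ k) (idx1 n₁ n₂ j) = 0) ∧
    (∀ k l, M (idx2 n₁ n₂ k) (idx2 n₁ n₂ l) = 0) ∧
    (∀ k, M (idx2 n₁ n₂ k) (idxV n₁ n₂) = -ψ B k) ∧
    M (idxV n₁ n₂) 0 = 0 ∧ (∀ j, M (idxV n₁ n₂) (idx1 n₁ n₂ j) = 0) ∧
    (∀ k, M (idxV n₁ n₂) (idx2 n₁ n₂ k) = 0) ∧ M (idxV n₁ n₂) (idxV n₁ n₂) = 0}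

lemma sum_split (n₁ n₂ : ℕ) (f : Fin (n₁ + n₂ + 2) → ℝ) :
    ∑ i, f i = f 0 + (∑ j, f (idx1 n₁ n₂ j)) + (∑ k, f (idx2 n₁ n₂ k)) + f (idxV n₁ n₂) := by
  rw [Fin.sum_univ_castSucc (n := n₁ + n₂ + 1), Fin.sum_univ_succ (n := n₁ + n₂)]
  rw [Fin.sum_univ_add (f := fun i : Fin (n₁ + n₂) => f (Fin.castSucc (Fin.succ i)))]
  have e0 : f (Fin.castSucc 0) = f 0 := by congr 1
  have eV : f (Fin.last (n₁ + n₂ + 1)) = f (idxV n₁ n₂) := by congr 1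
  have e1 : ∑ i : Fin n₁, f (Fin.castSucc (Fin.succ (Fin.castAdd n₂ i))) =
      ∑ j, f (idx1 n₁ n₂ j) := by
    apply Finset.sum_congr rfl; intro j _; congr 1
  have e2 : ∑ i : Fin n₂, f (Fin.castSucc (Fin.succ (Fin.natAdd n₁ i))) =
      ∑ k, f (idx2 n₁ n₂ k) := by
    apply Finset.sum_congr rfl; intro k _; congr 1; apply Fin.ext; simp [idx2]; omega
  rw [e0, eV, e1, e2]; ring

/-- For `n = n₁ + n₂`, a Lie subalgebra `𝔥 ⊆ so(n₁)` and a linear map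
`ψ : 𝔥 → ℝ^{n₂}` vanishing on `𝔥' = [𝔥,𝔥]`, the set `𝔥ol^{4,𝔥,ψ}` is closed under the
matrix commutator. -/
theorem statement7 (n₁ n₂ : ℕ) (hn₁ : 1 ≤ n₁) (hn₂ : 1 ≤ n₂)
    (𝔥 : LieSubalgebra ℝ (Matrix (Fin n₁) (Fin n₁) ℝ))
    (hskew : ∀ A ∈ 𝔥, A.transpose = -A)
    (ψ : 𝔥 →ₗ[ℝ] (Fin n₂ → ℝ))
    (hψ : ∀ A ∈ LieAlgebra.derivedSeries ℝ 𝔥 1, ψ A = 0) :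
    ∀ M ∈ hol4 n₁ n₂ 𝔥 ψ, ∀ N ∈ hol4 n₁ n₂ 𝔥 ψ, M * N - N * M ∈ hol4 n₁ n₂ 𝔥 ψ := by
  intro M hM N hN
  obtain ⟨X, A, B, hAd, hBc, h00, h01, h02, h0V, h10, h11, h12, h1V, h20, h21, h22,
    h2V, hV0, hV1, hV2, hVV⟩ := hM
  obtain ⟨Y, C, D, hCd, hDc, g00, g01, g02, g0V, g10, g11, g12, g1V, g20, g21, g22,
    g2V, gV0, gV1, gV2, gVV⟩ := hN
  have sk : ∀ E : 𝔥, ∀ p q, (E : Matrix (Fin n₁) (Fin n₁) ℝ) q p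
      = -(E : Matrix (Fin n₁) (Fin n₁) ℝ) p q := by
    intro E p q
    have := congrFun (congrFun (hskew E E.2) p) q
    simpa [Matrix.transpose_apply] using this
  have cen : ∀ E : 𝔥, E ∈ LieAlgebra.center ℝ 𝔥 → ∀ F : 𝔥,
      (E : Matrix (Fin n₁) (Fin n₁) ℝ) * F = (F : Matrix (Fin n₁) (Fin n₁) ℝ) * E := by
    intro E hE F
    have h : (⁅F, E⁆ : 𝔥) = 0 := hE F
    have h2 := congrArg (Subtype.val) h
    simp only [LieSubalgebra.coe_bracket, ZeroMemClass.coe_zero, Ring.lie_def] at h2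
    exact (sub_eq_zero.mp h2).symm
  have hcomm : ((A : Matrix (Fin n₁) (Fin n₁) ℝ) + B) * ((C : Matrix (Fin n₁) (Fin n₁) ℝ) + D)
      - ((C : Matrix (Fin n₁) (Fin n₁) ℝ) + D) * ((A : Matrix (Fin n₁) (Fin n₁) ℝ) + B)
      = (A : Matrix (Fin n₁) (Fin n₁) ℝ) * C - (C : Matrix (Fin n₁) (Fin n₁) ℝ) * A := by
    simp only [mul_add, add_mul]
    rw [cen B hBc C, cen B hBc D, cen D hDc A]
    abel
  have eA : ∀ i : Fin n₁, ∑ l, Y l * ((A : Matrix (Fin n₁) (Fin n₁) ℝ) l i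
        + (B : Matrix (Fin n₁) (Fin n₁) ℝ) l i)
      = ∑ l, ((A : Matrix (Fin n₁) (Fin n₁) ℝ) i l
        + (B : Matrix (Fin n₁) (Fin n₁) ℝ) i l) * (-Y l) := by
    intro i
    refine Finset.sum_congr rfl fun l _ => ?_
    rw [sk A i l, sk B i l]; ring
  have eC : ∀ i : Fin n₁, ∑ l, X l * ((C : Matrix (Fin n₁) (Fin n₁) ℝ) l i
        + (D : Matrix (Fin n₁) (Fin n₁) ℝ) l i)
      = ∑ l, ((C : Matrix (Fin n₁) (Fin n₁) ℝ) i l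
        + (D : Matrix (Fin n₁) (Fin n₁) ℝ) i l) * (-X l) := by
    intro i
    refine Finset.sum_congr rfl fun l _ => ?_
    rw [sk C i l, sk D i l]; ring
  refine ⟨fun j => (∑ l, X l * ((C : Matrix (Fin n₁) (Fin n₁) ℝ) l j
      + (D : Matrix (Fin n₁) (Fin n₁) ℝ) l j))
      - ∑ l, Y l * ((A : Matrix (Fin n₁) (Fin n₁) ℝ) l j
      + (B : Matrix (Fin n₁) (Fin n₁) ℝ) l j), ⁅A, C⁆, 0, ?_, ?_,
    ?_, ?_, ?_, ?_, ?_, ?_, ?_, ?_, ?_, ?_, ?_, ?_, ?_, ?_, ?_, ?_⟩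
  · rw [LieAlgebra.derivedSeries_def, LieAlgebra.derivedSeriesOfIdeal_succ,
      LieAlgebra.derivedSeriesOfIdeal_zero]
    exact LieSubmodule.lie_mem_lie (LieSubmodule.mem_top _) (LieSubmodule.mem_top _)
  · exact (LieAlgebra.center ℝ 𝔥).zero_mem
  · simp [Matrix.sub_apply, Matrix.mul_apply, sum_split n₁ n₂, h00, h01, h02, h0V, h10, h11, h12, h1V, h20, h21, h22, h2V, hV0, hV1, hV2, hVV, g00, g01, g02, g0V, g10, g11, g12, g1V, g20, g21, g22, g2V, gV0, gV1, gV2, gVV, map_zero]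
  · intro j
    simp [Matrix.sub_apply, Matrix.mul_apply, sum_split n₁ n₂, h00, h01, h02, h0V, h10, h11, h12, h1V, h20, h21, h22, h2V, hV0, hV1, hV2, hVV, g00, g01, g02, g0V, g10, g11, g12, g1V, g20, g21, g22, g2V, gV0, gV1, gV2, gVV, map_zero]
  · intro k
    simp [Matrix.sub_apply, Matrix.mul_apply, sum_split n₁ n₂, h00, h01, h02, h0V, h10, h11, h12, h1V, h20, h21, h22, h2V, hV0, hV1, hV2, hVV, g00, g01, g02, g0V, g10, g11, g12, g1V, g20, g21, g22, g2V, gV0, gV1, gV2, gVV, map_zero]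
  · have c1 : ∑ x : Fin n₁, X x * Y x = ∑ x : Fin n₁, Y x * X x :=
      Finset.sum_congr rfl fun x _ => mul_comm _ _
    have c2 : ∑ x : Fin n₂, ψ B x * ψ D x = ∑ x : Fin n₂, ψ D x * ψ B x :=
      Finset.sum_congr rfl fun x _ => mul_comm _ _
    simp [Matrix.sub_apply, Matrix.mul_apply, sum_split n₁ n₂, h00, h01, h02, h0V, h10, h11, h12, h1V, h20, h21, h22, h2V, hV0, hV1, hV2, hVV, g00, g01, g02, g0V, g10, g11, g12, g1V, g20, g21, g22, g2V, gV0, gV1, gV2, gVV, map_zero]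
    rw [c1, c2]; ring
  · intro i
    simp [Matrix.sub_apply, Matrix.mul_apply, sum_split n₁ n₂, h00, h01, h02, h0V, h10, h11, h12, h1V, h20, h21, h22, h2V, hV0, hV1, hV2, hVV, g00, g01, g02, g0V, g10, g11, g12, g1V, g20, g21, g22, g2V, gV0, gV1, gV2, gVV, map_zero]
  · intro i j
    have h := congrFun (congrFun hcomm i) j
    simp only [Matrix.sub_apply, Matrix.add_apply, Matrix.mul_apply] at h
    simp only [Matrix.sub_apply, Matrix.mul_apply, sum_split n₁ n₂, h10, h11, h12, h1V,
      g00, g01, g02, g0V, g10, g11, g12, g1V, g21, gV1, h21, hV1, h00, h20, hV0, g20, gV0,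
      LieSubalgebra.coe_bracket, Ring.lie_def, ZeroMemClass.coe_zero, Matrix.zero_apply]
    simp only [mul_zero, zero_mul, Finset.sum_const_zero, add_zero, zero_add, neg_zero]
    linarith [h]
  · intro i k
    simp [Matrix.sub_apply, Matrix.mul_apply, sum_split n₁ n₂, h00, h01, h02, h0V, h10, h11, h12, h1V, h20, h21, h22, h2V, hV0, hV1, hV2, hVV, g00, g01, g02, g0V, g10, g11, g12, g1V, g20, g21, g22, g2V, gV0, gV1, gV2, gVV, map_zero]
  · intro i
    simp only [Matrix.sub_apply, Matrix.mul_apply, sum_split n₁ n₂, h10, h11, h12, h1V,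
      g0V, g1V, g2V, gVV, h0V, h2V, hVV, g10, g11, g12, h00, g00]
    simp only [mul_zero, zero_mul, Finset.sum_const_zero, add_zero, zero_add, neg_zero]
    rw [eA i, eC i]
    ring
  · intro k
    simp [Matrix.sub_apply, Matrix.mul_apply, sum_split n₁ n₂, h00, h01, h02, h0V, h10, h11, h12, h1V, h20, h21, h22, h2V, hV0, hV1, hV2, hVV, g00, g01, g02, g0V, g10, g11, g12, g1V, g20, g21, g22, g2V, gV0, gV1, gV2, gVV, map_zero]
  · intro k j
    simp [Matrix.sub_apply, Matrix.mul_apply, sum_split n₁ n₂, h00, h01, h02, h0V, h10, h11, h12, h1V, h20, h21, h22, h2V, hV0, hV1, hV2, hVV, g00, g01, g02, g0V, g10, g11, g12, g1V, g20, g21, g22, g2V, gV0, gV1, gV2, gVV, map_zero]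
  · intro k l
    simp [Matrix.sub_apply, Matrix.mul_apply, sum_split n₁ n₂, h00, h01, h02, h0V, h10, h11, h12, h1V, h20, h21, h22, h2V, hV0, hV1, hV2, hVV, g00, g01, g02, g0V, g10, g11, g12, g1V, g20, g21, g22, g2V, gV0, gV1, gV2, gVV, map_zero]
  · intro k
    simp [Matrix.sub_apply, Matrix.mul_apply, sum_split n₁ n₂, h00, h01, h02, h0V, h10, h11, h12, h1V, h20, h21, h22, h2V, hV0, hV1, hV2, hVV, g00, g01, g02, g0V, g10, g11, g12, g1V, g20, g21, g22, g2V, gV0, gV1, gV2, gVV, map_zero]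
  · simp [Matrix.sub_apply, Matrix.mul_apply, sum_split n₁ n₂, h00, h01, h02, h0V, h10, h11, h12, h1V, h20, h21, h22, h2V, hV0, hV1, hV2, hVV, g00, g01, g02, g0V, g10, g11, g12, g1V, g20, g21, g22, g2V, gV0, gV1, gV2, gVV, map_zero]
  · intro j
    simp [Matrix.sub_apply, Matrix.mul_apply, sum_split n₁ n₂, h00, h01, h02, h0V, h10, h11, h12, h1V, h20, h21, h22, h2V, hV0, hV1, hV2, hVV, g00, g01, g02, g0V, g10, g11, g12, g1V, g20, g21, g22, g2V, gV0, gV1, gV2, gVV, map_zero]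
  · intro k
    simp [Matrix.sub_apply, Matrix.mul_apply, sum_split n₁ n₂, h00, h01, h02, h0V, h10, h11, h12, h1V, h20, h21, h22, h2V, hV0, hV1, hV2, hVV, g00, g01, g02, g0V, g10, g11, g12, g1V, g20, g21, g22, g2V, gV0, gV1, gV2, gVV, map_zero]
  · simp [Matrix.sub_apply, Matrix.mul_apply, sum_split n₁ n₂, h00, h01, h02, h0V, h10, h11, h12, h1V, h20, h21, h22, h2V, hV0, hV1, hV2, hVV, g00, g01, g02, g0V, g10, g11, g12, g1V, g20, g21, g22, g2V, gV0, gV1, gV2, gVV, map_zero]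
end

section
/- Let n ≥ 0 and let η be the Lorentzian bilinear form on ℝ^{n+2} described in the context. Let ξ ∈ ℝ^{n+2} be a nonzero vector with η(ξ,ξ) = 0, and let S be a linear subspace such that ξ^⊥ = S ⊕ ℝξ (a screen complement). Then there exists a unique vector N ∈ ℝ^{n+2} such that η(N,N) = 0, η(ξ,N) = 1, and η(N,w) = 0 for all w ∈ S. -/
/-!
Work with a nondegenerate symmetric form `B` on a finite-dimensional space over a field with
`2 ≠ 0`. Since `ξ ∉ S = S^⊥⊥`, some `t ⊥ S` has `B(ξ,t) = 1`; as `ξ` is isotropic and orthogonal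
to `S`, the vector `t - (B(t,t)/2) ξ` is null and still satisfies the other two conditions. Two
solutions differ by a vector orthogonal to `S ⊔ Kξ = ξ^⊥`, hence lying in `ξ^⊥⊥ = Kξ`; writing
`N' = N + cξ`, isotropy of `N'` forces `2c = 0`.

For `η` itself, `η(x,y) = ∑ xᵢ y_{σ i}` with `σ` the transposition of `0` and `n+1`, so
`η(x, x ∘ σ) = ∑ xᵢ²` gives nondegeneracy.
-/

def mid (n : ℕ) (i : Fin n) : Fin (n + 2) := ⟨(i : ℕ) + 1, by omega⟩

def lastIdx (n : ℕ) : Fin (n + 2) := ⟨n + 1, by omega⟩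

/-- The Lorentzian bilinear form on `ℝ^{n+2}` with Gram matrix `[[0,0,1],[0,E_n,0],[1,0,0]]`
in the basis `U = e_0, X_1 = e_1, …, X_n = e_n, V = e_{n+1}`. -/
def eta (n : ℕ) (x y : Fin (n + 2) → ℝ) : ℝ :=
  x 0 * y (lastIdx n) + x (lastIdx n) * y 0 + ∑ i : Fin n, x (mid n i) * y (mid n i)

lemma eta_add_left (n : ℕ) (x y z : Fin (n + 2) → ℝ) :
    eta n (x + y) z = eta n x z + eta n y z := by
  simp only [eta, Pi.add_apply, add_mul]
  rw [Finset.sum_add_distrib]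
  ring

lemma eta_smul_left (n : ℕ) (c : ℝ) (x y : Fin (n + 2) → ℝ) :
    eta n (c • x) y = c * eta n x y := by
  simp only [eta, Pi.smul_apply, smul_eq_mul, mul_add, Finset.mul_sum, mul_assoc]

/-- `η`-orthogonal complement of a subspace. -/
def etaPerp (n : ℕ) (W : Submodule ℝ (Fin (n + 2) → ℝ)) : Submodule ℝ (Fin (n + 2) → ℝ) where
  carrier := {v | ∀ w ∈ W, eta n v w = 0}
  zero_mem' := by intro w hw; simp [eta]
  add_mem' := by
    intro a b ha hb w hw
    rw [eta_add_left, ha w hw, hb w hw, add_zero]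
  smul_mem' := by
    intro c x hx w hw
    rw [eta_smul_left, hx w hw, mul_zero]

namespace LinearMap.BilinForm

variable {K V : Type*} [Field K] [AddCommGroup V] [Module K V] [FiniteDimensional K V]
  {B : LinearMap.BilinForm K V} {S : Submodule K V} {ξ : V}

theorem exists_mem_orthogonal_apply_eq_one (hB : B.Nondegenerate) (hsymm : B.IsSymm)
    (hξS : ξ ∉ S) : ∃ t ∈ B.orthogonal S, B ξ t = 1 := by
  rw [← orthogonal_orthogonal hB hsymm.isRefl S] at hξS
  obtain ⟨t, htS, hξt⟩ : ∃ t ∈ B.orthogonal S, B ξ t ≠ 0 := by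
    simpa [mem_orthogonal_iff, hsymm.eq _ ξ] using hξS
  refine ⟨(B ξ t)⁻¹ • t, Submodule.smul_mem _ _ htS, ?_⟩
  rw [map_smul, smul_eq_mul, inv_mul_cancel₀ hξt]

theorem exists_isotropic_apply_eq_one [NeZero (2 : K)] (hB : B.Nondegenerate)
    (hsymm : B.IsSymm) (hiso : B ξ ξ = 0) (hξS : ξ ∉ S) (hSξ : ∀ w ∈ S, B ξ w = 0) :
    ∃ N, B N N = 0 ∧ B ξ N = 1 ∧ ∀ w ∈ S, B N w = 0 := by
  obtain ⟨t, htS, hξt⟩ := exists_mem_orthogonal_apply_eq_one hB hsymm hξS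
  refine ⟨t - (B t t / 2) • ξ, ?_, ?_, fun w hw => ?_⟩
  · have h2 : (2 : K) ≠ 0 := two_ne_zero
    simp only [map_sub, map_smul, LinearMap.sub_apply, LinearMap.smul_apply, smul_eq_mul,
      hiso, hξt, hsymm.eq t ξ]
    field_simp
    ring
  · simp [hiso, hξt]
  · simp [hsymm.eq t w, htS w hw, hSξ w hw]

theorem eq_of_isotropic_apply_eq_one [NeZero (2 : K)] (hB : B.Nondegenerate)
    (hsymm : B.IsSymm) (hiso : B ξ ξ = 0) (hsum : S ⊔ K ∙ ξ = B.orthogonal (K ∙ ξ))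
    {N N' : V} (hN : B N N = 0 ∧ B ξ N = 1 ∧ ∀ w ∈ S, B N w = 0)
    (hN' : B N' N' = 0 ∧ B ξ N' = 1 ∧ ∀ w ∈ S, B N' w = 0) : N' = N := by
  obtain ⟨hNN, hξN, hNS⟩ := hN
  obtain ⟨hN'N', hξN', hN'S⟩ := hN'
  have hperp : N' - N ∈ B.orthogonal (S ⊔ K ∙ ξ) := by
    intro w hw
    obtain ⟨s, hs, _, hz, rfl⟩ := Submodule.mem_sup.1 hw
    obtain ⟨c, rfl⟩ := Submodule.mem_span_singleton.1 hz
    rw [hsymm.eq]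
    simp [hNS s hs, hN'S s hs, hsymm.eq N ξ, hsymm.eq N' ξ, hξN, hξN']
  rw [hsum, orthogonal_orthogonal hB hsymm.isRefl] at hperp
  obtain ⟨c, hc⟩ := Submodule.mem_span_singleton.1 hperp
  rw [eq_sub_iff_add_eq'] at hc
  have hc0 : 2 * c = 0 := by
    simpa [← hc, hNN, hiso, hξN, hsymm.eq N ξ, two_mul] using hN'N'
  rw [← hc, (mul_eq_zero.1 hc0).resolve_left two_ne_zero, zero_smul, add_zero]

theorem existsUnique_isotropic_apply_eq_one [NeZero (2 : K)] (hB : B.Nondegenerate)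
    (hsymm : B.IsSymm) (hξ : ξ ≠ 0) (hiso : B ξ ξ = 0)
    (hsum : S ⊔ K ∙ ξ = B.orthogonal (K ∙ ξ)) (hdisj : Disjoint S (K ∙ ξ)) :
    ∃! N, B N N = 0 ∧ B ξ N = 1 ∧ ∀ w ∈ S, B N w = 0 := by
  have hξS : ξ ∉ S := fun h =>
    hξ (Submodule.disjoint_def.1 hdisj ξ h (Submodule.mem_span_singleton_self ξ))
  have hSξ : ∀ w ∈ S, B ξ w = 0 := fun w hw =>
    (hsum ▸ Submodule.mem_sup_left hw : w ∈ B.orthogonal (K ∙ ξ)) ξ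
      (Submodule.mem_span_singleton_self ξ)
  obtain ⟨N, hN⟩ := exists_isotropic_apply_eq_one hB hsymm hiso hξS hSξ
  exact ⟨N, hN, fun N' hN' => eq_of_isotropic_apply_eq_one hB hsymm hiso hsum hN hN'⟩

end LinearMap.BilinForm

lemma eta_eq_sum_swap (n : ℕ) (x y : Fin (n + 2) → ℝ) :
    eta n x y = ∑ i, x i * y (Equiv.swap 0 (lastIdx n) i) := by
  have hlast : (Fin.last n).succ = lastIdx n := rfl
  have hsucc : ∀ i : Fin n, i.castSucc.succ = mid n i := fun _ => rfl
  have hmid : ∀ i : Fin n, Equiv.swap 0 (lastIdx n) (mid n i) = mid n i := fun i =>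
    Equiv.swap_apply_of_ne_of_ne (by simp [mid, Fin.ext_iff])
      (by simp [mid, lastIdx, Fin.ext_iff]; omega)
  rw [Fin.sum_univ_succ, Fin.sum_univ_castSucc]
  simp only [hlast, hsucc, hmid, Equiv.swap_apply_left, Equiv.swap_apply_right, eta]
  ring

lemma eta_symm (n : ℕ) (x y : Fin (n + 2) → ℝ) : eta n x y = eta n y x := by
  rw [eta_eq_sum_swap, eta_eq_sum_swap, ← Equiv.sum_comp (Equiv.swap 0 (lastIdx n))]
  simp only [Equiv.swap_apply_self, mul_comm]

lemma eta_self_swap (n : ℕ) (x : Fin (n + 2) → ℝ) :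
    eta n x (x ∘ Equiv.swap 0 (lastIdx n)) = ∑ i, x i * x i := by
  simp only [eta_eq_sum_swap, Function.comp_apply, Equiv.swap_apply_self]

def etaBilin (n : ℕ) : LinearMap.BilinForm ℝ (Fin (n + 2) → ℝ) :=
  LinearMap.mk₂ ℝ (eta n) (eta_add_left n) (eta_smul_left n)
    (fun x y z => by rw [eta_symm, eta_add_left, eta_symm n y, eta_symm n z])
    (fun c x y => by rw [eta_symm, eta_smul_left, eta_symm n y, smul_eq_mul])

lemma etaBilin_isSymm (n : ℕ) : (etaBilin n).IsSymm := ⟨eta_symm n⟩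

lemma etaBilin_nondegenerate (n : ℕ) : (etaBilin n).Nondegenerate := by
  refine (etaBilin_isSymm n).isRefl.nondegenerate_iff_separatingLeft.2 fun x hx => ?_
  have hxx : ∑ i, x i * x i = 0 := eta_self_swap n x ▸ hx _
  funext i
  exact (Finset.sum_mul_self_eq_zero_iff _ _).1 hxx i (Finset.mem_univ i)

lemma etaPerp_eq_orthogonal (n : ℕ) (W : Submodule ℝ (Fin (n + 2) → ℝ)) :
    etaPerp n W = (etaBilin n).orthogonal W := by
  ext v
  exact forall₂_congr fun w _ => by rw [eta_symm]; rfl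

/-- Given a nonzero isotropic vector `ξ` and a screen complement `S` with
`ξ^⊥ = S ⊕ ℝξ`, there is a unique `N` with `η(N,N) = 0`, `η(ξ,N) = 1` and `η(N,S) = 0`. -/
theorem statement8 (n : ℕ) (ξ : Fin (n + 2) → ℝ) (hξ0 : ξ ≠ 0) (hξiso : eta n ξ ξ = 0)
    (S : Submodule ℝ (Fin (n + 2) → ℝ))
    (hsum : S ⊔ Submodule.span ℝ {ξ} = etaPerp n (Submodule.span ℝ {ξ}))
    (hdisj : S ⊓ Submodule.span ℝ {ξ} = ⊥) :
    ∃! N : Fin (n + 2) → ℝ,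
      eta n N N = 0 ∧ eta n ξ N = 1 ∧ ∀ w ∈ S, eta n N w = 0 := by
  rw [etaPerp_eq_orthogonal] at hsum
  exact (etaBilin n).existsUnique_isotropic_apply_eq_one (etaBilin_nondegenerate n)
    (etaBilin_isSymm n) hξ0 hξiso hsum (disjoint_iff.2 hdisj)
end

section
/- Let n ≥ 0, let η be the Lorentzian bilinear form on ℝ^{n+2} described in the context, let 𝔤 ⊆ so(1,n+1)_{ℝU} be a Lie subalgebra, and let R ∈ 𝓡(𝔤). Then for all u, v, w ∈ span{X_1, …, X_n} the cyclic identity η(R(V,u)v, w) + η(R(V,v)w, u) + η(R(V,w)u, v) = 0 holds. (This is the first-Bianchi-type identity satisfied by the component P(x) := R(V,x) of the curvature tensor in the decomposition of 𝓡(𝔤).) -/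
/-- The vector `U = e_0`. -/
def Uvec (n : ℕ) : Fin (n + 2) → ℝ := Pi.single 0 1

/-- The vector `V = e_{n+1}`. -/
def Vvec (n : ℕ) : Fin (n + 2) → ℝ := Pi.single (lastIdx n) 1

/-- The set of basis vectors `X_1 = e_1, …, X_n = e_n`. -/
def Xset (n : ℕ) : Set (Fin (n + 2) → ℝ) := Set.range fun i : Fin n => Pi.single (mid n i) 1

attribute [local instance 100] LieRing.ofAssociativeRing

/-- a curvature tensor `R ∈ 𝓡(𝔤)` for `𝔤 ⊆ so(1,n+1)_{ℝU}` satisfies the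
first-Bianchi-type cyclic identity
`η(R(V,u)v, w) + η(R(V,v)w, u) + η(R(V,w)u, v) = 0` for `u, v, w ∈ span{X_1, …, X_n}`. -/
theorem statement14 (n : ℕ)
    (𝔤 : LieSubalgebra ℝ (Module.End ℝ (Fin (n + 2) → ℝ)))
    (h𝔤 : ∀ M ∈ 𝔤, (∀ x y, eta n (M x) y + eta n x (M y) = 0) ∧
      (∀ v ∈ Submodule.span ℝ {Uvec n}, M v ∈ Submodule.span ℝ {Uvec n}))
    (R : (Fin (n + 2) → ℝ) →ₗ[ℝ] (Fin (n + 2) → ℝ) →ₗ[ℝ] Module.End ℝ (Fin (n + 2) → ℝ))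
    (hRval : ∀ u v, R u v ∈ 𝔤)
    (hRanti : ∀ u v, R u v = -R v u)
    (hRBianchi : ∀ u v w, R u v w + R v w u + R w u v = 0) :
    ∀ u ∈ Submodule.span ℝ (Xset n), ∀ v ∈ Submodule.span ℝ (Xset n),
      ∀ w ∈ Submodule.span ℝ (Xset n),
        eta n (R (Vvec n) u v) w + eta n (R (Vvec n) v w) u + eta n (R (Vvec n) w u) v = 0 := by
  intro u _ v _ w _
  have hsym : ∀ x y, eta n x y = eta n y x := by
    intro x y
    simp only [eta]
    rw [Finset.sum_congr rfl (fun i _ => mul_comm (x (mid n i)) (y (mid n i)))]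
    ring
  have hadd : ∀ x y z, eta n (x + y) z = eta n x z + eta n y z := by
    intro x y z
    simp only [eta, Pi.add_apply, add_mul, Finset.sum_add_distrib]
    ring
  have hneg : ∀ x y, eta n (-x) y = - eta n x y := by
    intro x y
    simp only [eta, Pi.neg_apply, neg_mul, Finset.sum_neg_distrib]
    ring
  have hskew : ∀ a b x y, eta n (R a b x) y + eta n x (R a b y) = 0 :=
    fun a b => (h𝔤 (R a b) (hRval a b)).1
  -- F1 : skew in the last two arguments
  have F1 : ∀ a b c d, eta n (R a b c) d = - eta n (R a b d) c := by
    intro a b c d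
    have h := hskew a b c d
    rw [hsym c (R a b d)] at h
    linarith
  -- F2 : skew in the first two arguments
  have F2 : ∀ a b c d, eta n (R a b c) d = - eta n (R b a c) d := by
    intro a b c d
    have h : R a b c = -(R b a c) := by rw [hRanti a b]; rfl
    rw [h, hneg]
  -- F3 : Bianchi
  have F3 : ∀ a b c d, eta n (R a b c) d + eta n (R b c a) d + eta n (R c a b) d = 0 := by
    intro a b c d
    have h := congrArg (fun x => eta n x d) (hRBianchi a b c)
    simp only [hadd] at h
    have h0 : eta n (0 : Fin (n+2) → ℝ) d = 0 := by simp [eta]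
    rw [h0] at h
    linarith
  set V' := Vvec n with hV'
  linarith [F3 V' u v w, F3 u v w V', F3 v w V' u, F3 w V' u v,
    F2 v V' u w, F1 u v w V', F1 v w u V', F2 w u v V', F1 u w v V',
    F2 w V' v u, F1 V' w v u, F1 V' v w u, F2 w V' u v, F1 V' u w v,
    F2 u w v V', F1 w u v V', F2 V' v w u]
end
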